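/- arXiv:math/0605703 — 2 statements merged into one kernel-verified Lean document; each statement's English description precedes it below -/
import Mathlib

section
/- For all positive integers n and m, 2 · Σ_{l=0}^{n-1} (-1)^l l^m = (-1)^{n+1} · Σ_{l=0}^{m-1} C(m,l) E_l n^{m-l} + ((-1)^{n+1} + 1) · E_m, an identity of rational numbers. -/
/-!
The Euler polynomials `E_m(x) = ∑_{l ≤ m} C(m,l) E_l x^{m-l}` form an Appell sequence,
`E_m(x + y) = ∑_j C(m,j) E_{m-j}(x) y^j`, and the defining recurrence of the Euler numbers is the
functional equation `E_k(1) + E_k(0) = 2·0^k`. Together they give `E_m(x + 1) + E_m(x) = 2 x^m`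
for all `x`, so `2 ∑_{l<n} (-1)^l l^m` telescopes to `E_m(0) - (-1)^n E_m(n)`.
-/

/-- The Euler numbers `E₀ = 1`, `∑_{k=0}^{n} C(n,k) Eₖ + Eₙ = 0` for `n ≥ 1`. -/
noncomputable def eulerNumber : ℕ → ℚ
  | 0 => 1
  | n + 1 => (-1/2) * ∑ k ∈ (Finset.range (n+1)).attach,
      ((n+1).choose k.1 : ℚ) * eulerNumber k.1
  decreasing_by exact Finset.mem_range.mp k.2

open Finset

theorem Nat.choose_mul_choose_sub_comm {m i j : ℕ} (h : i + j ≤ m) :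
    m.choose i * (m - i).choose j = m.choose j * (m - j).choose i :=
  calc m.choose i * (m - i).choose j = m.choose (m - i) * (m - i).choose j := by
        rw [Nat.choose_symm (by omega)]
    _ = m.choose j * (m - j).choose (m - i - j) := Nat.choose_mul (by omega)
    _ = m.choose j * (m - j).choose i := by
        rw [show m - i - j = m - j - i by omega, Nat.choose_symm (by omega)]

theorem Finset.sum_range_neg_one_pow_mul_succ_add {R : Type*} [CommRing R] (f : ℕ → R) (n : ℕ) :
    ∑ l ∈ range n, (-1) ^ l * (f (l + 1) + f l) = f 0 - (-1) ^ n * f n :=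
  calc ∑ l ∈ range n, (-1) ^ l * (f (l + 1) + f l)
      = -∑ l ∈ range n, ((-1) ^ (l + 1) * f (l + 1) - (-1) ^ l * f l) := by
        rw [← sum_neg_distrib]
        exact sum_congr rfl fun l _ => by ring
    _ = f 0 - (-1) ^ n * f n := by
        rw [sum_range_sub (fun l => (-1 : R) ^ l * f l)]
        ring

theorem sum_range_choose_mul_eulerNumber {k : ℕ} (hk : 0 < k) :
    ∑ l ∈ range k, (k.choose l : ℚ) * eulerNumber l = -2 * eulerNumber k := by
  obtain ⟨j, rfl⟩ := Nat.exists_eq_add_of_lt hk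
  rw [zero_add, eulerNumber,
    sum_attach (range (j + 1)) fun l => ((j + 1).choose l : ℚ) * eulerNumber l]
  ring

-- With `eulerNumber k = E_k(0)` this is the classical Euler polynomial, of generating function
-- `2 e^{xt} / (e^t + 1)`.
noncomputable def eulerPoly (m : ℕ) (x : ℚ) : ℚ :=
  ∑ l ∈ range (m + 1), (m.choose l : ℚ) * eulerNumber l * x ^ (m - l)

theorem eulerPoly_eq_sum_range_add_eulerNumber (m : ℕ) (x : ℚ) :
    eulerPoly m x =
      ∑ l ∈ range m, (m.choose l : ℚ) * eulerNumber l * x ^ (m - l) + eulerNumber m := by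
  simp [eulerPoly, sum_range_succ]

theorem eulerPoly_zero_right (m : ℕ) : eulerPoly m 0 = eulerNumber m := by
  rw [eulerPoly_eq_sum_range_add_eulerNumber, add_eq_right]
  refine sum_eq_zero fun l hl => ?_
  rw [zero_pow (Nat.sub_ne_zero_of_lt (mem_range.mp hl)), mul_zero]

theorem eulerPoly_one_add_eulerPoly_zero (k : ℕ) :
    eulerPoly k 1 + eulerPoly k 0 = 2 * 0 ^ k := by
  rcases k.eq_zero_or_pos with rfl | hk
  · norm_num [eulerPoly, eulerNumber]
  · simp only [eulerPoly_eq_sum_range_add_eulerNumber k 1, one_pow, mul_one,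
      sum_range_choose_mul_eulerNumber hk, eulerPoly_zero_right, zero_pow hk.ne']
    ring

theorem eulerPoly_add (m : ℕ) (x y : ℚ) :
    eulerPoly m (x + y) =
      ∑ j ∈ range (m + 1), (m.choose j : ℚ) * eulerPoly (m - j) x * y ^ j :=
  calc eulerPoly m (x + y)
      = ∑ i ∈ range (m + 1), ∑ j ∈ range (m - i + 1),
          (m.choose i : ℚ) * ((m - i).choose j : ℚ) * eulerNumber i * x ^ (m - i - j) * y ^ j := by
        refine sum_congr rfl fun i _ => ?_
        rw [add_comm x, add_pow, mul_sum]
        exact sum_congr rfl fun j _ => by ring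
    _ = ∑ j ∈ range (m + 1), ∑ i ∈ range (m - j + 1),
          (m.choose i : ℚ) * ((m - i).choose j : ℚ) * eulerNumber i * x ^ (m - i - j) * y ^ j :=
        sum_comm' fun i j => by simp only [mem_range]; constructor <;> omega
    _ = ∑ j ∈ range (m + 1), (m.choose j : ℚ) * eulerPoly (m - j) x * y ^ j := by
        refine sum_congr rfl fun j hj => ?_
        rw [eulerPoly, mul_sum, sum_mul]
        refine sum_congr rfl fun i hi => ?_
        have hij : i + j ≤ m := by simp only [mem_range] at hi hj; omega
        rw [show m - i - j = m - j - i by omega]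
        have := congrArg (Nat.cast (R := ℚ)) (Nat.choose_mul_choose_sub_comm hij)
        push_cast at this
        linear_combination (eulerNumber i * x ^ (m - j - i) * y ^ j) * this

theorem eulerPoly_add_one_add_eulerPoly (m : ℕ) (x : ℚ) :
    eulerPoly m (x + 1) + eulerPoly m x = 2 * x ^ m :=
  calc eulerPoly m (x + 1) + eulerPoly m x = eulerPoly m (1 + x) + eulerPoly m (0 + x) := by
        rw [add_comm x, zero_add]
    _ = ∑ j ∈ range (m + 1),
          (m.choose j : ℚ) * (eulerPoly (m - j) 1 + eulerPoly (m - j) 0) * x ^ j := by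
        rw [eulerPoly_add, eulerPoly_add, ← sum_add_distrib]
        exact sum_congr rfl fun _ _ => by ring
    _ = ∑ j ∈ range (m + 1), (m.choose j : ℚ) * (2 * 0 ^ (m - j)) * x ^ j := by
        simp only [eulerPoly_one_add_eulerPoly_zero]
    _ = 2 * x ^ m := by
        rw [sum_eq_single_of_mem m (self_mem_range_succ m)]
        · simp
        · intro j hj hjm
          have : m - j ≠ 0 := by simp only [mem_range] at hj; omega
          rw [zero_pow this, mul_zero, mul_zero, zero_mul]

theorem alternating_sum_powers_general (n m : ℕ) :
    2 * ∑ l ∈ Finset.range n, (-1 : ℚ) ^ l * (l : ℚ) ^ m =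
      (-1 : ℚ) ^ (n + 1) *
        ∑ l ∈ Finset.range m, (m.choose l : ℚ) * eulerNumber l * (n : ℚ) ^ (m - l) +
      ((-1 : ℚ) ^ (n + 1) + 1) * eulerNumber m :=
  calc 2 * ∑ l ∈ range n, (-1 : ℚ) ^ l * (l : ℚ) ^ m
      = ∑ l ∈ range n, (-1) ^ l * (eulerPoly m (l + 1 : ℕ) + eulerPoly m l) := by
        rw [mul_sum]
        exact sum_congr rfl fun l _ => by
          rw [Nat.cast_succ, eulerPoly_add_one_add_eulerPoly]; ring
    _ = eulerPoly m 0 - (-1) ^ n * eulerPoly m n := by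
        exact_mod_cast sum_range_neg_one_pow_mul_succ_add (fun l : ℕ => eulerPoly m l) n
    _ = _ := by
        rw [eulerPoly_zero_right, eulerPoly_eq_sum_range_add_eulerNumber]
        ring

/-- For positive integers `n, m`,
`2 ∑_{l=0}^{n-1} (-1)^l l^m
  = (-1)^{n+1} ∑_{l=0}^{m-1} C(m,l) E_l n^{m-l} + ((-1)^{n+1} + 1) E_m`. -/
theorem alternating_sum_powers (n m : ℕ) (hn : 0 < n) (hm : 0 < m) :
    2 * ∑ l ∈ Finset.range n, (-1 : ℚ) ^ l * (l : ℚ) ^ m =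
      (-1 : ℚ) ^ (n + 1) *
        ∑ l ∈ Finset.range m, (m.choose l : ℚ) * eulerNumber l * (n : ℚ) ^ (m - l) +
      ((-1 : ℚ) ^ (n + 1) + 1) * eulerNumber m :=
  alternating_sum_powers_general n m
end

section
/- Let p be an odd prime and let n, t be positive integers with n ≡ t (mod p−1). Then in ℚ_p, l_p(-n, ω^t) := Σ_{a=1}^{p-1} (-1)^a ⟨a⟩^{n} ω(a)^t Σ_{j=0}^{n} C(n,j)(p/a)^j E_j = (1 − p^n) E_n. -/
/-!
Let `E(t) = ∑ Eₙ tⁿ / n!`; the recurrence defining the Euler numbers says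
`E(t) (eᵗ + 1) = 2`.
For odd `m` the alternating sum telescopes: `(∑_{a<m} (-1)^a e^{at}) (eᵗ + 1) = 1 + e^{mt}`.
Hence `(∑_{a<m} (-1)^a e^{at} E(mt)) (eᵗ + 1) = (1 + e^{mt}) E(mt) = 2 = E(t) (eᵗ + 1)`, and
cancelling `eᵗ + 1` and comparing coefficients of `tⁿ` gives
`∑_{a=0}^{m-1} (-1)^a ∑_j C(n,j) m^j a^{n-j} E_j = Eₙ`, whose `a = 0` term is `mⁿ Eₙ`.
With `m = p`, the summand of `l_p(-n, ω^t)` is this one, since `⟨a⟩ⁿ ω(a)^t = aⁿ` when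
`ω(a)^{p-1} = 1` and `n ≡ t (mod p - 1)`.
-/

open Finset PowerSeries
open scoped Nat

theorem sum_range_neg_one_pow_smul_succ_add {R M : Type*} [CommRing R] [AddCommGroup M]
    [Module R M] (f : ℕ → M) (m : ℕ) :
    ∑ a ∈ range m, (-1 : R) ^ a • (f (a + 1) + f a) = f 0 - (-1 : R) ^ m • f m := by
  induction m with
  | zero => simp
  | succ m ih => rw [sum_range_succ, ih, pow_succ]; module

theorem coeff_mk_mul_mk_mul_factorial {K : Type*} [Field K] [CharZero K] (u v : ℕ → K)
    (n : ℕ) :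
    coeff n ((mk fun k => u k / k !) * mk fun k => v k / k !) * n ! =
      ∑ k ∈ range (n + 1), n.choose k * u k * v (n - k) := by
  rw [coeff_mul, Nat.sum_antidiagonal_eq_sum_range_succ_mk, sum_mul]
  refine sum_congr rfl fun k hk => ?_
  rw [Nat.cast_choose K (mem_range_succ_iff.mp hk)]
  simp only [coeff_mk]
  field_simp

theorem exp_eq_mk : exp ℚ = mk fun n => (1 : ℚ) / n ! := by
  ext n
  simp [coeff_exp]

theorem rescale_exp_mul_exp_add_one {A : Type*} [CommRing A] [Algebra ℚ A] (a : ℕ) :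
    rescale (a : A) (exp A) * (exp A + 1) =
      rescale ((a + 1 : ℕ) : A) (exp A) + rescale (a : A) (exp A) := by
  rw [Nat.cast_succ, ← exp_mul_exp_eq_exp_add, rescale_one, RingHom.id_apply, mul_add, mul_one]

theorem sum_range_neg_one_pow_smul_rescale_exp_mul_exp_add_one {A : Type*} [CommRing A]
    [Algebra ℚ A] {m : ℕ} (hm : Odd m) :
    (∑ a ∈ range m, (-1 : A) ^ a • rescale (a : A) (exp A)) * (exp A + 1) =
      rescale (m : A) (exp A) + 1 := by
  simp only [sum_mul, smul_mul_assoc, rescale_exp_mul_exp_add_one]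
  rw [sum_range_neg_one_pow_smul_succ_add (fun a : ℕ => rescale (a : A) (exp A)),
    hm.neg_one_pow]
  simp [add_comm]

theorem eulerNumber_zero : eulerNumber 0 = 1 := by rw [eulerNumber]

theorem sum_range_choose_mul_eulerNumber_add_eulerNumber {n : ℕ} (hn : n ≠ 0) :
    ∑ k ∈ range (n + 1), (n.choose k : ℚ) * eulerNumber k + eulerNumber n = 0 := by
  obtain ⟨n, rfl⟩ := Nat.exists_eq_succ_of_ne_zero hn
  rw [sum_range_succ, Nat.choose_self, eulerNumber, sum_attach (range (n + 1))
    (fun k => ((n + 1).choose k : ℚ) * eulerNumber k)]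
  ring

noncomputable def eulerSeries : ℚ⟦X⟧ := mk fun n => eulerNumber n / n !

theorem eulerSeries_mul_exp_add_one : eulerSeries * (exp ℚ + 1) = 2 := by
  ext n
  have hn : (n ! : ℚ) ≠ 0 := by positivity
  have hprod := coeff_mk_mul_mk_mul_factorial eulerNumber (fun _ => 1) n
  simp only [mul_one] at hprod
  rw [← mul_left_inj' hn, mul_add, mul_one, map_add, add_mul, exp_eq_mk, eulerSeries, hprod,
    coeff_mk, div_mul_cancel₀ _ hn, ← map_ofNat C 2, coeff_C]
  rcases eq_or_ne n 0 with rfl | hn0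
  · norm_num [eulerNumber_zero]
  · simpa [hn0] using sum_range_choose_mul_eulerNumber_add_eulerNumber hn0

theorem sum_range_neg_one_pow_smul_rescale_eulerSeries_mul_rescale_exp {m : ℕ} (hm : Odd m) :
    ∑ a ∈ range m, (-1 : ℚ) ^ a • (rescale (m : ℚ) eulerSeries * rescale (a : ℚ) (exp ℚ)) =
      eulerSeries := by
  have hexp : exp ℚ + 1 ≠ 0 := fun h => by
    simpa using congrArg constantCoeff h
  refine mul_right_cancel₀ hexp ?_
  simp only [← mul_smul_comm, ← mul_sum, mul_assoc,
    sum_range_neg_one_pow_smul_rescale_exp_mul_exp_add_one hm]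
  rw [eulerSeries_mul_exp_add_one, ← map_one (rescale (m : ℚ)), ← map_add, ← map_mul,
    eulerSeries_mul_exp_add_one, map_ofNat]

theorem sum_range_neg_one_pow_mul_sum_choose_eulerNumber {m : ℕ} (hm : Odd m) (n : ℕ) :
    ∑ a ∈ range m, (-1 : ℚ) ^ a *
      ∑ j ∈ range (n + 1), n.choose j * (m : ℚ) ^ j * (a : ℚ) ^ (n - j) * eulerNumber j =
      eulerNumber n := by
  have h := congrArg (fun f => coeff n f * (n ! : ℚ))
    (sum_range_neg_one_pow_smul_rescale_eulerSeries_mul_rescale_exp hm)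
  simp only [map_sum, coeff_smul, smul_eq_mul, sum_mul, mul_assoc, eulerSeries, exp_eq_mk,
    rescale_mk, mul_div_assoc', mul_one] at h
  rw [coeff_mk, div_mul_cancel₀ _ (by positivity)] at h
  rw [← h]
  refine sum_congr rfl fun a _ => ?_
  rw [coeff_mk_mul_mk_mul_factorial (fun k => (m : ℚ) ^ k * eulerNumber k)
    (fun k => (a : ℚ) ^ k)]
  exact congrArg _ (sum_congr rfl fun j _ => by ring)

theorem sum_Icc_neg_one_pow_mul_sum_choose_eulerNumber {K : Type*} [Field K] [CharZero K]
    {m : ℕ} (hm : Odd m) (n : ℕ) :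
    ∑ a ∈ Icc 1 (m - 1), (-1 : K) ^ a *
      ∑ j ∈ range (n + 1), (n.choose j : K) * (m : K) ^ j * (a : K) ^ (n - j) * eulerNumber j =
      (1 - (m : K) ^ n) * eulerNumber n := by
  have h := congrArg (Rat.cast : ℚ → K) (sum_range_neg_one_pow_mul_sum_choose_eulerNumber hm n)
  have hsplit : range m = insert 0 (Icc 1 (m - 1)) := by
    ext a
    simp only [mem_range, mem_insert, mem_Icc]
    have := hm.pos
    omega
  have hzero : ∑ j ∈ range (n + 1), (n.choose j : K) * (m : K) ^ j * (0 : K) ^ (n - j) *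
      eulerNumber j = (m : K) ^ n * eulerNumber n := by
    rw [sum_eq_single_of_mem n (self_mem_range_succ n) fun j hj hjn => by
      rw [zero_pow (by grind), mul_zero, zero_mul]]
    simp
  push_cast at h
  rw [hsplit, sum_insert (by simp), Nat.cast_zero, hzero, pow_zero, one_mul] at h
  linear_combination h

theorem div_pow_mul_pow_of_pow_eq_one {K : Type*} [Field K] {w : K} {k : ℕ} (hw : w ^ k = 1)
    (hk : k ≠ 0) {n t : ℕ} (hnt : n % k = t % k) (x : K) : (x / w) ^ n * w ^ t = x ^ n := by
  have hw0 : w ≠ 0 := ne_zero_pow hk (hw ▸ one_ne_zero)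
  rw [pow_eq_pow_mod t hw, ← hnt, ← pow_eq_pow_mod n hw, div_pow,
    div_mul_cancel₀ _ (pow_ne_zero n hw0)]

theorem pow_mul_sum_mul_div_pow_mul {K : Type*} [Field K] {x : K} (hx : x ≠ 0) (y : K)
    (c d : ℕ → K) (n : ℕ) :
    x ^ n * ∑ j ∈ range (n + 1), c j * (y / x) ^ j * d j =
      ∑ j ∈ range (n + 1), c j * y ^ j * x ^ (n - j) * d j := by
  rw [mul_sum]
  refine sum_congr rfl fun j hj => ?_
  rw [← Nat.sub_add_cancel (mem_range_succ_iff.mp hj), pow_add, div_pow, Nat.add_sub_cancel]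
  field_simp

theorem lp_at_neg_n_general (p : ℕ) [Fact p.Prime] (hp : Odd p)
    (n t : ℕ) (hnt : n % (p - 1) = t % (p - 1))
    (ω : ℕ → ℤ_[p])
    (hω : ∀ a : ℕ, 0 < a → a < p → (ω a) ^ (p - 1) = 1 ∧ ‖ω a - (a : ℤ_[p])‖ < 1) :
    ∑ a ∈ Finset.Icc 1 (p - 1),
        (-1 : ℚ_[p]) ^ a * ((a : ℚ_[p]) / (ω a : ℚ_[p])) ^ n * ((ω a : ℚ_[p])) ^ t *
          ∑ j ∈ Finset.range (n + 1),
            (n.choose j : ℚ_[p]) * ((p : ℚ_[p]) / (a : ℚ_[p])) ^ j *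
              (eulerNumber j : ℚ_[p]) =
      (1 - (p : ℚ_[p]) ^ n) * (eulerNumber n : ℚ_[p]) := by
  rw [← sum_Icc_neg_one_pow_mul_sum_choose_eulerNumber hp n]
  refine sum_congr rfl fun a ha => ?_
  obtain ⟨ha1, hap⟩ := mem_Icc.mp ha
  have hωa : (ω a : ℚ_[p]) ^ (p - 1) = 1 := by
    rw [← PadicInt.coe_pow, (hω a ha1 (by omega)).1, PadicInt.coe_one]
  have ha0 : (a : ℚ_[p]) ≠ 0 := by exact_mod_cast (by omega : a ≠ 0)
  rw [mul_assoc _ _ ((ω a : ℚ_[p]) ^ t), div_pow_mul_pow_of_pow_eq_one hωa (by omega) hnt,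
    mul_assoc, pow_mul_sum_mul_div_pow_mul ha0]

/-- For an odd prime `p` and positive integers `n ≡ t (mod p-1)`, with `ω a` the
Teichmüller lift of `a` (the unique `(p-1)`-st root of unity `≡ a (mod p)` in `ℤ_p`)
and `⟨a⟩ = a/ω(a)`:
`l_p(-n, ω^t) = ∑_{a=1}^{p-1} (-1)^a ⟨a⟩^n ω(a)^t ∑_{j=0}^{n} C(n,j)(p/a)^j E_j
  = (1 - p^n) E_n` in `ℚ_p`. -/
theorem lp_at_neg_n (p : ℕ) [Fact p.Prime] (hp : Odd p)
    (n t : ℕ) (hn : 0 < n) (ht : 0 < t) (hnt : n % (p - 1) = t % (p - 1))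
    (ω : ℕ → ℤ_[p])
    (hω : ∀ a : ℕ, 0 < a → a < p → (ω a) ^ (p - 1) = 1 ∧ ‖ω a - (a : ℤ_[p])‖ < 1) :
    ∑ a ∈ Finset.Icc 1 (p - 1),
        (-1 : ℚ_[p]) ^ a * ((a : ℚ_[p]) / (ω a : ℚ_[p])) ^ n * ((ω a : ℚ_[p])) ^ t *
          ∑ j ∈ Finset.range (n + 1),
            (n.choose j : ℚ_[p]) * ((p : ℚ_[p]) / (a : ℚ_[p])) ^ j *
              (eulerNumber j : ℚ_[p]) =
      (1 - (p : ℚ_[p]) ^ n) * (eulerNumber n : ℚ_[p]) :=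
  lp_at_neg_n_general p hp n t hnt ω hω
end
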